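/- The boundary-value problem g − ℓ₁² g″ + ℓ₂⁴ g⁗ − ℓ₃⁶ g⁽⁶⁾ = f with boundary conditions g′(a) = g‴(a) = g⁽⁵⁾(a) = 0 and g(b) = g′(b) = g″(b) = 0 has at most one solution in C⁶([a,b]). -/

import Mathlib

/-! The difference `h` of two solutions solves the homogeneous problem `L h = 0`, where
`L = 1 - α D² + β D⁴ - γ D⁶`. Integrating `h · L h` by parts three times gives the Green identity
`B' = E - h · L h` with the energy density `E = h² + α h'² + β h''² + γ h'''²` and a bilinear
boundary form `B` in `h, …, h⁽⁵⁾`. Each term of `B` contains one of `h', h''', h⁽⁵⁾` and one of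
`h, h', h''`, so the boundary conditions kill `B(a)` and `B(b)`; hence `∫ₐᵇ E = 0`, and
`E ≥ 0` is continuous, so `E`, and with it `h²`, vanishes on `[a, b]`. -/

open Set

theorem ContDiff.hasDerivAt_iteratedDeriv {𝕜 F : Type*} [NontriviallyNormedField 𝕜]
    [NormedAddCommGroup F] [NormedSpace 𝕜 F] {f : 𝕜 → F} {n k : ℕ} (hf : ContDiff 𝕜 n f)
    (hk : k < n) (x : 𝕜) :
    HasDerivAt (iteratedDeriv k f) (iteratedDeriv (k + 1) f x) x := by
  rw [iteratedDeriv_succ]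
  exact (hf.differentiable_iteratedDeriv k (mod_cast hk) x).hasDerivAt

theorem ContDiff.iteratedDeriv_sub {𝕜 F : Type*} [NontriviallyNormedField 𝕜]
    [NormedAddCommGroup F] [NormedSpace 𝕜 F] {f g : 𝕜 → F} {n k : ℕ} (hf : ContDiff 𝕜 n f)
    (hg : ContDiff 𝕜 n g) (hk : k ≤ n) (x : 𝕜) :
    iteratedDeriv k (f - g) x = iteratedDeriv k f x - iteratedDeriv k g x :=
  _root_.iteratedDeriv_sub (hf.contDiffAt.of_le (mod_cast hk)) (hg.contDiffAt.of_le (mod_cast hk))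

theorem eqOn_zero_of_intervalIntegral_eq_zero {f : ℝ → ℝ} {a b : ℝ} (hab : a < b)
    (hf : ContinuousOn f (Icc a b)) (hf₀ : ∀ x ∈ Icc a b, 0 ≤ f x)
    (hint : ∫ x in a..b, f x = 0) : EqOn f 0 (Icc a b) := by
  intro c hc
  by_contra hne
  have hpos := intervalIntegral.integral_lt_integral_of_continuousOn_of_le_of_exists_lt hab
    continuousOn_const hf (fun x hx ↦ hf₀ x (Ioc_subset_Icc_self hx))
    ⟨c, hc, (hf₀ c hc).lt_of_ne (Ne.symm hne)⟩
  simp [hint] at hpos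

noncomputable section SixthOrder

variable (α β γ : ℝ) (h : ℝ → ℝ)

def sixthOrderOp (s : ℝ) : ℝ :=
  h s - α * iteratedDeriv 2 h s + β * iteratedDeriv 4 h s - γ * iteratedDeriv 6 h s

def sixthOrderEnergy (s : ℝ) : ℝ :=
  h s ^ 2 + α * iteratedDeriv 1 h s ^ 2 + β * iteratedDeriv 2 h s ^ 2
    + γ * iteratedDeriv 3 h s ^ 2

def sixthOrderBoundaryForm (s : ℝ) : ℝ :=
  α * (h s * iteratedDeriv 1 h s)
    - β * (h s * iteratedDeriv 3 h s - iteratedDeriv 1 h s * iteratedDeriv 2 h s)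
    + γ * (h s * iteratedDeriv 5 h s - iteratedDeriv 1 h s * iteratedDeriv 4 h s
      + iteratedDeriv 2 h s * iteratedDeriv 3 h s)

variable {α β γ h}

theorem sixthOrderOp_sub {g₁ g₂ : ℝ → ℝ} (hg₁ : ContDiff ℝ 6 g₁) (hg₂ : ContDiff ℝ 6 g₂)
    (s : ℝ) :
    sixthOrderOp α β γ (g₁ - g₂) s = sixthOrderOp α β γ g₁ s - sixthOrderOp α β γ g₂ s := by
  simp only [sixthOrderOp, hg₁.iteratedDeriv_sub hg₂ (by norm_num : 2 ≤ 6),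
    hg₁.iteratedDeriv_sub hg₂ (by norm_num : 4 ≤ 6), hg₁.iteratedDeriv_sub hg₂ le_rfl, Pi.sub_apply]
  ring

theorem hasDerivAt_sixthOrderBoundaryForm (hh : ContDiff ℝ 6 h) (s : ℝ) :
    HasDerivAt (sixthOrderBoundaryForm α β γ h)
      (sixthOrderEnergy α β γ h s - h s * sixthOrderOp α β γ h s) s := by
  have d (k : ℕ) (hk : k < 6 := by norm_num) := hh.hasDerivAt_iteratedDeriv hk s
  have d₀ : HasDerivAt h (iteratedDeriv 1 h s) s := by simpa using d 0
  have H : HasDerivAt (sixthOrderBoundaryForm α β γ h) _ s :=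
    (((d₀.mul (d 1)).const_mul α).sub (((d₀.mul (d 3)).sub ((d 1).mul (d 2))).const_mul β)).add
      ((((d₀.mul (d 5)).sub ((d 1).mul (d 4))).add ((d 2).mul (d 3))).const_mul γ)
  refine H.congr_deriv ?_
  simp only [sixthOrderEnergy, sixthOrderOp, Nat.reduceAdd]
  ring

theorem continuous_sixthOrderEnergy (hh : ContDiff ℝ 3 h) :
    Continuous (sixthOrderEnergy α β γ h) := by
  have c (k : ℕ) (hk : k ≤ 3 := by norm_num) := hh.continuous_iteratedDeriv k (mod_cast hk)
  have := hh.continuous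
  have := c 1
  have := c 2
  have := c 3
  unfold sixthOrderEnergy
  fun_prop

theorem sq_le_sixthOrderEnergy (hα : 0 ≤ α) (hβ : 0 ≤ β) (hγ : 0 ≤ γ) (s : ℝ) :
    h s ^ 2 ≤ sixthOrderEnergy α β γ h s := by
  unfold sixthOrderEnergy
  have : 0 ≤ α * iteratedDeriv 1 h s ^ 2 + β * iteratedDeriv 2 h s ^ 2
      + γ * iteratedDeriv 3 h s ^ 2 := by positivity
  linarith

theorem sixthOrderEnergy_nonneg (hα : 0 ≤ α) (hβ : 0 ≤ β) (hγ : 0 ≤ γ) (s : ℝ) :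
    0 ≤ sixthOrderEnergy α β γ h s :=
  (sq_nonneg _).trans (sq_le_sixthOrderEnergy hα hβ hγ s)

theorem integral_sixthOrderEnergy {a b : ℝ} (hab : a ≤ b) (hh : ContDiff ℝ 6 h)
    (hL : ∀ s ∈ Icc a b, sixthOrderOp α β γ h s = 0) :
    ∫ s in a..b, sixthOrderEnergy α β γ h s =
      sixthOrderBoundaryForm α β γ h b - sixthOrderBoundaryForm α β γ h a := by
  refine intervalIntegral.integral_eq_sub_of_hasDerivAt (fun s hs ↦ ?_)
    ((continuous_sixthOrderEnergy (hh.of_le (by norm_num))).intervalIntegrable a b)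
  rw [uIcc_of_le hab] at hs
  simpa [hL s hs] using hasDerivAt_sixthOrderBoundaryForm (α := α) (β := β) (γ := γ) hh s

theorem sixthOrderBoundaryForm_eq_zero_of_odd_derivs {s : ℝ} (h₁ : iteratedDeriv 1 h s = 0)
    (h₃ : iteratedDeriv 3 h s = 0) (h₅ : iteratedDeriv 5 h s = 0) :
    sixthOrderBoundaryForm α β γ h s = 0 := by
  simp [sixthOrderBoundaryForm, h₁, h₃, h₅]

theorem sixthOrderBoundaryForm_eq_zero_of_low_derivs {s : ℝ} (h₀ : h s = 0)
    (h₁ : iteratedDeriv 1 h s = 0) (h₂ : iteratedDeriv 2 h s = 0) :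
    sixthOrderBoundaryForm α β γ h s = 0 := by
  simp [sixthOrderBoundaryForm, h₀, h₁, h₂]

theorem eqOn_zero_of_sixthOrderOp_eq_zero {a b : ℝ} (hab : a < b) (hα : 0 ≤ α) (hβ : 0 ≤ β)
    (hγ : 0 ≤ γ) (hh : ContDiff ℝ 6 h) (hL : ∀ s ∈ Icc a b, sixthOrderOp α β γ h s = 0)
    (ha₁ : iteratedDeriv 1 h a = 0) (ha₃ : iteratedDeriv 3 h a = 0)
    (ha₅ : iteratedDeriv 5 h a = 0) (hb₀ : h b = 0) (hb₁ : iteratedDeriv 1 h b = 0)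
    (hb₂ : iteratedDeriv 2 h b = 0) : EqOn h 0 (Icc a b) := by
  have hE : ∫ s in a..b, sixthOrderEnergy α β γ h s = 0 := by
    rw [integral_sixthOrderEnergy hab.le hh hL,
      sixthOrderBoundaryForm_eq_zero_of_low_derivs hb₀ hb₁ hb₂,
      sixthOrderBoundaryForm_eq_zero_of_odd_derivs ha₁ ha₃ ha₅, sub_zero]
  have hE₀ := eqOn_zero_of_intervalIntegral_eq_zero hab
    (continuous_sixthOrderEnergy (hh.of_le (by norm_num))).continuousOn
    (fun s _ ↦ sixthOrderEnergy_nonneg hα hβ hγ s) hE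
  intro s hs
  have := sq_le_sixthOrderEnergy (h := h) hα hβ hγ s
  rw [hE₀ hs] at this
  exact (sq_nonpos_iff _).mp this

end SixthOrder

theorem sixth_order_bvp_unique_general
    (a b ℓ₁ ℓ₂ ℓ₃ : ℝ) (hab : a < b)
    (f : ℝ → ℝ)
    (g₁ g₂ : ℝ → ℝ) (hg₁ : ContDiff ℝ 6 g₁) (hg₂ : ContDiff ℝ 6 g₂)
    (hode₁ : ∀ s ∈ Set.Icc a b,
      g₁ s - ℓ₁^2 * iteratedDeriv 2 g₁ s + ℓ₂^4 * iteratedDeriv 4 g₁ s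
        - ℓ₃^6 * iteratedDeriv 6 g₁ s = f s)
    (hode₂ : ∀ s ∈ Set.Icc a b,
      g₂ s - ℓ₁^2 * iteratedDeriv 2 g₂ s + ℓ₂^4 * iteratedDeriv 4 g₂ s
        - ℓ₃^6 * iteratedDeriv 6 g₂ s = f s)
    (hba1₁ : deriv g₁ a = 0) (hba3₁ : iteratedDeriv 3 g₁ a = 0)
    (hba5₁ : iteratedDeriv 5 g₁ a = 0)
    (hbb0₁ : g₁ b = 0) (hbb1₁ : deriv g₁ b = 0) (hbb2₁ : iteratedDeriv 2 g₁ b = 0)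
    (hba1₂ : deriv g₂ a = 0) (hba3₂ : iteratedDeriv 3 g₂ a = 0)
    (hba5₂ : iteratedDeriv 5 g₂ a = 0)
    (hbb0₂ : g₂ b = 0) (hbb1₂ : deriv g₂ b = 0) (hbb2₂ : iteratedDeriv 2 g₂ b = 0) :
    ∀ s ∈ Set.Icc a b, g₁ s = g₂ s := by
  have hL (s) (hs : s ∈ Icc a b) : sixthOrderOp (ℓ₁ ^ 2) (ℓ₂ ^ 4) (ℓ₃ ^ 6) (g₁ - g₂) s = 0 := by
    rw [sixthOrderOp_sub hg₁ hg₂, sixthOrderOp, sixthOrderOp, hode₁ s hs, hode₂ s hs, sub_self]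
  intro s hs
  refine sub_eq_zero.mp <| eqOn_zero_of_sixthOrderOp_eq_zero (h := g₁ - g₂) hab (by positivity)
    (by positivity) (by positivity) (hg₁.sub hg₂) hL ?_ ?_ ?_ (by simp [hbb0₁, hbb0₂]) ?_ ?_ hs
  all_goals
    rw [hg₁.iteratedDeriv_sub hg₂ (by norm_num)]
    simp only [iteratedDeriv_one, *, sub_self]

/-- The boundary-value problem g − ℓ₁²g″ + ℓ₂⁴g⁗ − ℓ₃⁶g⁽⁶⁾ = f with boundary conditions
g′(a) = g‴(a) = g⁽⁵⁾(a) = 0 and g(b) = g′(b) = g″(b) = 0 has at most one C⁶ solution. -/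
theorem sixth_order_bvp_unique
    (a b ℓ₁ ℓ₂ ℓ₃ : ℝ) (hab : a < b) (h1 : 0 < ℓ₁) (h2 : 0 < ℓ₂) (h3 : 0 < ℓ₃)
    (f : ℝ → ℝ) (hf : ContinuousOn f (Set.Icc a b))
    (g₁ g₂ : ℝ → ℝ) (hg₁ : ContDiff ℝ 6 g₁) (hg₂ : ContDiff ℝ 6 g₂)
    (hode₁ : ∀ s ∈ Set.Icc a b,
      g₁ s - ℓ₁^2 * iteratedDeriv 2 g₁ s + ℓ₂^4 * iteratedDeriv 4 g₁ s
        - ℓ₃^6 * iteratedDeriv 6 g₁ s = f s)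
    (hode₂ : ∀ s ∈ Set.Icc a b,
      g₂ s - ℓ₁^2 * iteratedDeriv 2 g₂ s + ℓ₂^4 * iteratedDeriv 4 g₂ s
        - ℓ₃^6 * iteratedDeriv 6 g₂ s = f s)
    (hba1₁ : deriv g₁ a = 0) (hba3₁ : iteratedDeriv 3 g₁ a = 0)
    (hba5₁ : iteratedDeriv 5 g₁ a = 0)
    (hbb0₁ : g₁ b = 0) (hbb1₁ : deriv g₁ b = 0) (hbb2₁ : iteratedDeriv 2 g₁ b = 0)
    (hba1₂ : deriv g₂ a = 0) (hba3₂ : iteratedDeriv 3 g₂ a = 0)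
    (hba5₂ : iteratedDeriv 5 g₂ a = 0)
    (hbb0₂ : g₂ b = 0) (hbb1₂ : deriv g₂ b = 0) (hbb2₂ : iteratedDeriv 2 g₂ b = 0) :
    ∀ s ∈ Set.Icc a b, g₁ s = g₂ s :=
  sixth_order_bvp_unique_general a b ℓ₁ ℓ₂ ℓ₃ hab f g₁ g₂ hg₁ hg₂ hode₁ hode₂ hba1₁ hba3₁ hba5₁
    hbb0₁ hbb1₁ hbb2₁ hba1₂ hba3₂ hba5₂ hbb0₂ hbb1₂ hbb2₂
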